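/- arXiv:2502.17175 — 3 statements merged into one kernel-verified Lean document; each statement's English description precedes it below -/
import Mathlib

section
/- Let A ∈ R^{d×d} be positive definite and define x*(v) = A v / ‖v‖_A for nonzero v ∈ R^d. For any nonzero θ, u ∈ R^d, if θ^T A u ≥ 0 then θ^T ( x*(θ) − x*(u) ) ≤ ‖θ − u‖_A² / ‖θ‖_A. -/
/-!
With `s = ‖θ‖_A`, `t = ‖u‖_A` and `c = θᵀAu`, the claim reads `s - c / t ≤ (s² - 2c + t²) / s`.
Clearing denominators it becomes `c (2t - s) ≤ t³`. This is trivial when `2t ≤ s` since `c ≥ 0`;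
otherwise Cauchy–Schwarz `c ≤ st` reduces it to `t³ - st (2t - s) = t (t - s)² ≥ 0`.
-/

open Matrix

namespace Matrix

variable {n : Type*} [Fintype n] {A : Matrix n n ℝ}

lemma IsHermitian.dotProduct_mulVec_comm (hA : A.IsHermitian) (x y : n → ℝ) :
    x ⬝ᵥ A *ᵥ y = y ⬝ᵥ A *ᵥ x := by
  rw [dotProduct_mulVec, ← mulVec_transpose, ← conjTranspose_eq_transpose_of_trivial, hA.eq,
    dotProduct_comm]

lemma IsHermitian.sub_dotProduct_mulVec_sub (hA : A.IsHermitian) (x y : n → ℝ) :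
    (x - y) ⬝ᵥ A *ᵥ (x - y) = x ⬝ᵥ A *ᵥ x - 2 * (x ⬝ᵥ A *ᵥ y) + y ⬝ᵥ A *ᵥ y := by
  simp only [mulVec_sub, dotProduct_sub, sub_dotProduct, hA.dotProduct_mulVec_comm y x]
  ring

lemma PosSemidef.dotProduct_mulVec_sq_le (hA : A.PosSemidef) (x y : n → ℝ) :
    (x ⬝ᵥ A *ᵥ y) ^ 2 ≤ (x ⬝ᵥ A *ᵥ x) * (y ⬝ᵥ A *ᵥ y) := by
  let := A.toSeminormedAddCommGroup hA
  let := A.toInnerProductSpace hA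
  have inner_eq (v w : n → ℝ) : inner ℝ v w = v ⬝ᵥ A *ᵥ w := dotProduct_comm _ _
  simpa only [inner_eq, sq] using real_inner_mul_inner_self_le x y

end Matrix

lemma sub_div_le_sq_sub_two_mul_add_sq_div {s t c : ℝ} (hs : 0 ≤ s) (ht : 0 ≤ t) (hc : 0 ≤ c)
    (hcst : c ≤ s * t) : s - c / t ≤ (s ^ 2 - 2 * c + t ^ 2) / s := by
  -- the degenerate cases `s = 0`, `t = 0` hold with the convention `x / 0 = 0`
  rcases hs.eq_or_lt with rfl | hs
  · simp only [div_zero, zero_sub, neg_nonpos]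
    positivity
  rcases ht.eq_or_lt with rfl | ht
  · have hc0 : c = 0 := by linarith
    simp [hc0, sq, hs.ne']
  have key : c * (2 * t - s) ≤ t ^ 3 := by
    rcases le_or_gt (2 * t - s) 0 with hst | hst
    · nlinarith [mul_nonpos_of_nonneg_of_nonpos hc hst, pow_pos ht 3]
    · calc c * (2 * t - s) ≤ s * t * (2 * t - s) := mul_le_mul_of_nonneg_right hcst hst.le
        _ ≤ t ^ 3 := by nlinarith [mul_nonneg ht.le (sq_nonneg (t - s))]
  rw [sub_div' ht.ne', div_le_div_iff₀ ht hs]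
  linear_combination key

theorem commit_error_quadratic_general {d : ℕ} (A : Matrix (Fin d) (Fin d) ℝ) (hA : A.PosDef)
    (θ u : Fin d → ℝ) (h : 0 ≤ θ ⬝ᵥ A *ᵥ u) :
    θ ⬝ᵥ ((Real.sqrt (θ ⬝ᵥ A *ᵥ θ))⁻¹ • (A *ᵥ θ) - (Real.sqrt (u ⬝ᵥ A *ᵥ u))⁻¹ • (A *ᵥ u))
      ≤ ((θ - u) ⬝ᵥ A *ᵥ (θ - u)) / Real.sqrt (θ ⬝ᵥ A *ᵥ θ) := by
  have ha : 0 ≤ θ ⬝ᵥ A *ᵥ θ := by simpa using hA.posSemidef.dotProduct_mulVec_nonneg θ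
  have hb : 0 ≤ u ⬝ᵥ A *ᵥ u := by simpa using hA.posSemidef.dotProduct_mulVec_nonneg u
  have hcs : θ ⬝ᵥ A *ᵥ u ≤ √(θ ⬝ᵥ A *ᵥ θ) * √(u ⬝ᵥ A *ᵥ u) := by
    rw [← Real.sqrt_mul ha]
    exact Real.le_sqrt_of_sq_le (hA.posSemidef.dotProduct_mulVec_sq_le θ u)
  have key := sub_div_le_sq_sub_two_mul_add_sq_div (Real.sqrt_nonneg _) (Real.sqrt_nonneg _) h hcs
  rw [Real.sq_sqrt ha, Real.sq_sqrt hb] at key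
  rwa [hA.isHermitian.sub_dotProduct_mulVec_sub, dotProduct_sub, dotProduct_smul, dotProduct_smul,
    smul_eq_mul, smul_eq_mul, inv_mul_eq_div, inv_mul_eq_div, Real.div_sqrt]

/-- For positive definite `A` and nonzero `θ, u` with `θᵀAu ≥ 0`, with
`x*(v) = Av/‖v‖_A`, one has `θᵀ(x*(θ) − x*(u)) ≤ ‖θ − u‖_A² / ‖θ‖_A`,
where `‖v‖_M = sqrt(vᵀ M v)`. -/
theorem commit_error_quadratic {d : ℕ} (A : Matrix (Fin d) (Fin d) ℝ) (hA : A.PosDef)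
    (θ u : Fin d → ℝ) (hθ : θ ≠ 0) (hu : u ≠ 0) (h : 0 ≤ θ ⬝ᵥ A *ᵥ u) :
    θ ⬝ᵥ ((Real.sqrt (θ ⬝ᵥ A *ᵥ θ))⁻¹ • (A *ᵥ θ) - (Real.sqrt (u ⬝ᵥ A *ᵥ u))⁻¹ • (A *ᵥ u))
      ≤ ((θ - u) ⬝ᵥ A *ᵥ (θ - u)) / Real.sqrt (θ ⬝ᵥ A *ᵥ θ) :=
  commit_error_quadratic_general A hA θ u h
end

section
/- For any nonzero vectors θ, u ∈ R^d with θ^T u ≥ 0 (Euclidean inner product), one has ‖ θ − (‖θ‖/‖u‖)·u ‖² ≤ 2 ‖θ − u‖², where ‖·‖ is the Euclidean norm. -/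
open scoped RealInnerProductSpace

/-!
With `a = ‖θ‖` and `s = ⟪θ, u⟫ / ‖u‖` the scalar projection of `θ` on `u`, the left-hand side is
`2 a (a - s)`. Since `0 ≤ s ≤ a`, this is at most `2 (a² - s²)`, twice the squared distance from `θ`
to the line `ℝ u`, and that distance is at most `‖θ - u‖`.
-/

section

variable {E : Type*} [NormedAddCommGroup E] [InnerProductSpace ℝ E]

theorem norm_sub_norm_div_norm_smul_sq (x : E) {u : E} (hu : u ≠ 0) :
    ‖x - (‖x‖ / ‖u‖) • u‖ ^ 2 = 2 * (‖x‖ * (‖x‖ - ⟪x, u⟫ / ‖u‖)) := by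
  have hu' : ‖u‖ ≠ 0 := norm_ne_zero_iff.mpr hu
  rw [norm_sub_sq_real, real_inner_smul_right, norm_smul,
    Real.norm_of_nonneg (div_nonneg (norm_nonneg x) (norm_nonneg u))]
  field_simp
  ring

theorem norm_sq_sub_inner_div_norm_sq_le_norm_sub_sq (x u : E) :
    ‖x‖ ^ 2 - (⟪x, u⟫ / ‖u‖) ^ 2 ≤ ‖x - u‖ ^ 2 := by
  rcases eq_or_ne u 0 with rfl | hu
  · simp
  have hu' : ‖u‖ ≠ 0 := norm_ne_zero_iff.mpr hu
  have hsq : (‖u‖ - ⟪x, u⟫ / ‖u‖) ^ 2 = ‖u‖ ^ 2 - 2 * ⟪x, u⟫ + (⟪x, u⟫ / ‖u‖) ^ 2 := by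
    field_simp
    ring
  rw [norm_sub_sq_real]
  linarith [sq_nonneg (‖u‖ - ⟪x, u⟫ / ‖u‖)]

theorem norm_mul_sub_inner_div_norm_le {x u : E} (h : 0 ≤ ⟪x, u⟫) :
    ‖x‖ * (‖x‖ - ⟪x, u⟫ / ‖u‖) ≤ ‖x‖ ^ 2 - (⟪x, u⟫ / ‖u‖) ^ 2 := by
  have hs : 0 ≤ ⟪x, u⟫ / ‖u‖ := div_nonneg h (norm_nonneg u)
  have hsx : ⟪x, u⟫ / ‖u‖ ≤ ‖x‖ :=
    div_le_of_le_mul₀ (norm_nonneg u) (norm_nonneg x) (real_inner_le_norm x u)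
  nlinarith [mul_nonneg hs (sub_nonneg.mpr hsx)]

end

theorem norm_sub_rescaled_le_general {d : ℕ} (θ u : EuclideanSpace ℝ (Fin d))
    (hu : u ≠ 0) (h : 0 ≤ ⟪θ, u⟫) :
    ‖θ - (‖θ‖ / ‖u‖) • u‖ ^ 2 ≤ 2 * ‖θ - u‖ ^ 2 :=
  calc ‖θ - (‖θ‖ / ‖u‖) • u‖ ^ 2 = 2 * (‖θ‖ * (‖θ‖ - ⟪θ, u⟫ / ‖u‖)) :=
        norm_sub_norm_div_norm_smul_sq θ hu
    _ ≤ 2 * (‖θ‖ ^ 2 - (⟪θ, u⟫ / ‖u‖) ^ 2) := by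
        gcongr
        exact norm_mul_sub_inner_div_norm_le h
    _ ≤ 2 * ‖θ - u‖ ^ 2 := by
        gcongr
        exact norm_sq_sub_inner_div_norm_sq_le_norm_sub_sq θ u

/-- For nonzero `θ, u ∈ ℝ^d` with `θᵀu ≥ 0`:
`‖θ − (‖θ‖/‖u‖)u‖² ≤ 2‖θ − u‖²`. -/
theorem norm_sub_rescaled_le {d : ℕ} (θ u : EuclideanSpace ℝ (Fin d))
    (hθ : θ ≠ 0) (hu : u ≠ 0) (h : 0 ≤ ⟪θ, u⟫) :
    ‖θ - (‖θ‖ / ‖u‖) • u‖ ^ 2 ≤ 2 * ‖θ - u‖ ^ 2 :=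
  norm_sub_rescaled_le_general θ u hu h
end

section
/- Let d ≥ 2 be a natural number and let c ≥ 2·sqrt(2) be a real number. Then ∑_{i=1}^{∞} sqrt(i·d·c²) · exp(−i·d·c²/4) ≤ exp(−d c²/8) / (1 − exp(−d c²/8)), and in particular the series on the left converges. -/
/-!
Since `√t ≤ exp (t / 8)` once `t ≥ 16`, each term `√(n x) exp (-n x / 4)` with `x = d c² ≥ 16`
is at most `exp (-x / 8) ^ n`, and the geometric series `∑_{n ≥ 1} exp (-x / 8) ^ n` sums to the
right-hand side.
-/

open Real

lemma le_exp_div_four {t : ℝ} (ht : 16 ≤ t) : t ≤ exp (t / 4) :=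
  calc t ≤ (1 + t / 16) ^ 4 := by nlinarith [sq_nonneg (t / 16 - 1), sq_nonneg (t - 16)]
    _ ≤ exp (t / 16) ^ 4 := by
      gcongr
      linarith [add_one_le_exp (t / 16)]
    _ = exp (t / 4) := by rw [← exp_nat_mul]; ring_nf

lemma sqrt_le_exp_div_eight {t : ℝ} (ht : 16 ≤ t) : √t ≤ exp (t / 8) := by
  rw [show t / 8 = t / 4 / 2 by ring, exp_half]
  exact sqrt_le_sqrt (le_exp_div_four ht)

lemma sqrt_mul_exp_neg_div_four_le {t : ℝ} (ht : 16 ≤ t) : √t * exp (-t / 4) ≤ exp (-t / 8) :=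
  calc √t * exp (-t / 4) ≤ exp (t / 8) * exp (-t / 4) := by
        gcongr; exact sqrt_le_exp_div_eight ht
    _ = exp (-t / 8) := by rw [← exp_add]; ring_nf

lemma summable_and_tsum_le_of_le_geometric_succ {f : ℕ → ℝ} {r : ℝ} (hf₀ : ∀ i, 0 ≤ f i)
    (hfr : ∀ i, f i ≤ r ^ (i + 1)) (hr : r < 1) : Summable f ∧ ∑' i, f i ≤ r / (1 - r) := by
  have hr₀ : 0 ≤ r := by simpa using (hf₀ 0).trans (hfr 0)
  have hgeo : HasSum (fun i : ℕ => r ^ (i + 1)) (r / (1 - r)) := by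
    simpa only [pow_succ', div_eq_mul_inv] using (hasSum_geometric_of_lt_one hr₀ hr).mul_left r
  have hf : Summable f := hgeo.summable.of_nonneg_of_le hf₀ hfr
  exact ⟨hf, hgeo.tsum_eq ▸ hf.tsum_le_tsum hfr hgeo.summable⟩

/-- For `d ≥ 2` and `c ≥ 2√2`, the series `∑_{i=1}^∞ sqrt(i d c²) exp(−i d c²/4)` converges
and its sum is at most `exp(−d c²/8) / (1 − exp(−d c²/8))`. -/
theorem tsum_sqrt_mul_exp_le (d : ℕ) (hd : 2 ≤ d) (c : ℝ) (hc : 2 * Real.sqrt 2 ≤ c) :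
    Summable (fun i : ℕ =>
      Real.sqrt (((i : ℝ) + 1) * d * c ^ 2) * Real.exp (-(((i : ℝ) + 1) * d * c ^ 2) / 4)) ∧
    ∑' i : ℕ, Real.sqrt (((i : ℝ) + 1) * d * c ^ 2) * Real.exp (-(((i : ℝ) + 1) * d * c ^ 2) / 4)
      ≤ Real.exp (-((d : ℝ) * c ^ 2) / 8) / (1 - Real.exp (-((d : ℝ) * c ^ 2) / 8)) := by
  have hc₈ : 8 ≤ c ^ 2 := by
    nlinarith [sq_sqrt (show (0 : ℝ) ≤ 2 by norm_num), sqrt_nonneg 2]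
  have hx : 16 ≤ (d : ℝ) * c ^ 2 := by
    nlinarith [show (2 : ℝ) ≤ d by exact_mod_cast hd]
  refine summable_and_tsum_le_of_le_geometric_succ (fun i => by positivity) (fun i => ?_)
    (exp_lt_one_iff.2 (by linarith))
  calc √(((i : ℝ) + 1) * d * c ^ 2) * exp (-(((i : ℝ) + 1) * d * c ^ 2) / 4)
      ≤ exp (-(((i : ℝ) + 1) * d * c ^ 2) / 8) :=
        sqrt_mul_exp_neg_div_four_le (by nlinarith [(i.cast_nonneg : (0 : ℝ) ≤ i)])
    _ = exp (-((d : ℝ) * c ^ 2) / 8) ^ (i + 1) := by rw [← exp_nat_mul]; push_cast; ring_nf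
end
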